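/- Let (V; M0,...,M4; c) be a Higmanian matrix configuration with valencies ni = c(i,i,0), and fix i ∈ {3,4}. Suppose there exist a symmetric {0,1}-matrix P with all diagonal entries 1, a natural number n' with P^2 = n'•P, and natural numbers λ1, λ2 such that (M2+Mi)^2 = (n2+ni)•I + λ1•(P−I) + λ2•(J−P); that is, M2+Mi is the adjacency matrix of a divisible design graph for some equal-class-size partition of V. Then c(3,3,3) = c(3,3,4), and at least one of the following holds (as equalities of rational numbers): (1) 1/n3 + 1/n4 = 1/n1 − 1/(n1+1), or (2) n2/(n1+1) − 2·ni/n_{7−i} = 1. -/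

import Mathlib

/-!
Write `rel x y` for the index of the basis relation containing `(x, y)`, so that a matrix
`∑ t, f t • M t` has entries `f (rel x y)`. Since `N1` is an equivalence, `M 1 * M i` and
`M 2 * M i` (`i ∈ {3, 4}`) are combinations of `M 3` and `M 4`, and the trivial radicals force
`N0 * M i` and `N1 * M i` to be multiples of `M 3 + M 4`. With row sums and the triangle
identity `c i j k * n k = c j k i * n i`, this yields `(M 2 + M i)² = ∑ t, a t • M t` with
explicit `a t`.

Comparing with the divisible design graph identity, either `λ1 = λ2` and all `a t` with `t ≠ 0`
coincide, or `P` is a union of basis relations. Such an equivalence contains `M 1` once it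
contains `M 2`, and `M 2` once it contains `M 3` or `M 4`; it cannot contain exactly one of
`M 3`, `M 4`, since `J - M w` cannot lie in the radical of `M w`. Hence `a 3 = a 4`, and `a 1 = a 2`
or `a 2 = a 3`: the first gives `c 3 3 3 = c 3 3 4`, the others turn into (1) and (2) once the
structure constants are eliminated.
-/

open Matrix Finset

/-- A *Higmanian matrix configuration* on a nonempty finite set `V`:
five nonzero symmetric `{0,1}`-matrices `M 0, …, M 4` over `ℤ` summing to the all-ones
matrix, with `M 0 = I`, structure constants `c`, parabolic conditions for
`N0 = M0 + M1` and `N1 = M0 + M1 + M2`, standard ordering `n3 ≤ n4`, and triviality of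
the radicals of `M 3` and `M 4`. -/
structure HigmanianConfig (V : Type*) [Fintype V] [DecidableEq V] : Type _ where
  nonempty : Nonempty V
  M : Fin 5 → Matrix V V ℤ
  c : Fin 5 → Fin 5 → Fin 5 → ℕ
  M_ne_zero : ∀ i, M i ≠ 0
  M_symm : ∀ i, (M i)ᵀ = M i
  M_entries : ∀ i x y, M i x y = 0 ∨ M i x y = 1
  M_zero : M 0 = 1
  sum_M : M 0 + M 1 + M 2 + M 3 + M 4 = Matrix.of fun _ _ => 1
  mul_M : ∀ i j, M i * M j = ∑ k : Fin 5, (c i j k : ℤ) • M k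
  N0_sq : (M 0 + M 1) * (M 0 + M 1) = ((1 + c 1 1 0 : ℕ) : ℤ) • (M 0 + M 1)
  N1_sq : (M 0 + M 1 + M 2) * (M 0 + M 1 + M 2)
      = ((1 + c 1 1 0 + c 2 2 0 : ℕ) : ℤ) • (M 0 + M 1 + M 2)
  N1_ne_J : M 0 + M 1 + M 2 ≠ Matrix.of fun _ _ => 1
  n3_le_n4 : c 3 3 0 ≤ c 4 4 0
  radical : ∀ j ∈ ({3, 4} : Finset (Fin 5)), ∀ T : Finset (Fin 5),
    T.Nonempty → T ⊆ ({1, 2, 3, 4} : Finset (Fin 5)) →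
    ¬ ((1 + ∑ t ∈ T, M t) * (1 + ∑ t ∈ T, M t)
          = (1 + ∑ t ∈ T, (c t t 0 : ℤ)) • (1 + ∑ t ∈ T, M t)
        ∧ (1 + ∑ t ∈ T, M t) * M j = (1 + ∑ t ∈ T, (c t t 0 : ℤ)) • M j)

/-- The valency `nᵢ = c i i 0` of the `i`-th basis matrix. -/
def HigmanianConfig.n {V : Type*} [Fintype V] [DecidableEq V]
    (X : HigmanianConfig V) (i : Fin 5) : ℕ := X.c i i 0

local notation "J" => Matrix.of fun _ _ => (1 : ℤ)

/-- `A` is the matrix of an equivalence relation all of whose classes have `k` elements. -/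
structure IsEquivMatrix {V : Type*} [Fintype V] (A : Matrix V V ℤ) (k : ℤ) : Prop where
  zero_or_one : ∀ x y, A x y = 0 ∨ A x y = 1
  symm : Aᵀ = A
  diag : ∀ x, A x x = 1
  sq : A * A = k • A

namespace IsEquivMatrix

variable {V : Type*} [Fintype V] {A F : Matrix V V ℤ} {k l : ℤ}

lemma apply_comm (hA : IsEquivMatrix A k) (x y : V) : A y x = A x y :=
  congrFun (congrFun hA.symm x) y

lemma trans (hA : IsEquivMatrix A k) {x y z : V} (hxy : A x y = 1) (hyz : A y z = 1) :
    A x z = 1 := by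
  have hle : A x y * A y z ≤ (A * A) x z :=
    single_le_sum (f := fun w => A x w * A w z)
      (fun w _ => by rcases hA.zero_or_one x w with h | h <;>
        rcases hA.zero_or_one w z with h' | h' <;> simp [h, h'])
      (mem_univ y)
  rw [hxy, hyz, hA.sq, Matrix.smul_apply, smul_eq_mul] at hle
  rcases hA.zero_or_one x z with h | h
  · simp [h] at hle
  · exact h

lemma row_sum (hA : IsEquivMatrix A k) (x : V) : ∑ y, A x y = k := by
  have h := congrFun (congrFun hA.sq x) x
  rw [mul_apply, Matrix.smul_apply, hA.diag, smul_eq_mul, mul_one] at h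
  rw [← h]
  refine sum_congr rfl fun y _ => ?_
  rw [hA.apply_comm x y]
  rcases hA.zero_or_one x y with h | h <;> simp [h]

lemma row_eq (hA : IsEquivMatrix A k) {x z : V} (hxz : A x z = 1) (w : V) : A z w = A x w := by
  rcases hA.zero_or_one z w with h | h <;> rcases hA.zero_or_one x w with h' | h'
  · rw [h, h']
  · have := hA.trans ((hA.apply_comm x z).trans hxz) h'
    omega
  · have := hA.trans hxz h
    omega
  · rw [h, h']

lemma mul_J (hA : IsEquivMatrix A k) : A * J = k • J := by
  ext x y
  simp [mul_apply, hA.row_sum]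

lemma mul_of_le (hA : IsEquivMatrix A k) (hF : IsEquivMatrix F l)
    (hle : ∀ x y, A x y = 1 → F x y = 1) : A * F = k • F := by
  ext x y
  rw [mul_apply, Matrix.smul_apply, smul_eq_mul, ← hA.row_sum x, sum_mul]
  refine sum_congr rfl fun z _ => ?_
  rcases hA.zero_or_one x z with h | h
  · simp [h]
  · rw [h, hF.row_eq (hle x z h)]

end IsEquivMatrix

namespace HigmanianConfig

variable {V : Type*} [Fintype V] [DecidableEq V] (X : HigmanianConfig V)

lemma exists_M_apply_eq_one (x y : V) : ∃ t, X.M t x y = 1 := by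
  by_contra! hne
  have hzero : ∀ t, X.M t x y = 0 := fun t => (X.M_entries t x y).resolve_right (hne t)
  simpa [hzero] using congrFun (congrFun X.sum_M x) y

lemma M_apply_eq_zero_of_ne {s t : Fin 5} {x y : V} (hs : X.M s x y = 1) (hts : t ≠ s) :
    X.M t x y = 0 := by
  have h := congrFun (congrFun X.sum_M x) y
  simp only [Matrix.add_apply, of_apply] at h
  have := X.M_entries 0 x y; have := X.M_entries 1 x y; have := X.M_entries 2 x y
  have := X.M_entries 3 x y; have := X.M_entries 4 x y
  fin_cases s <;> fin_cases t <;> simp_all <;> omega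

noncomputable def rel (x y : V) : Fin 5 := (X.exists_M_apply_eq_one x y).choose

lemma M_apply (t : Fin 5) (x y : V) : X.M t x y = if X.rel x y = t then 1 else 0 := by
  have hrel := (X.exists_M_apply_eq_one x y).choose_spec
  split_ifs with h
  · rwa [← h]
  · exact X.M_apply_eq_zero_of_ne hrel (Ne.symm h)

lemma sum_smul_M_apply (f : Fin 5 → ℤ) (x y : V) :
    (∑ t, f t • X.M t) x y = f (X.rel x y) := by
  simp only [Matrix.sum_apply, Matrix.smul_apply, M_apply, smul_eq_mul, mul_ite, mul_one, mul_zero,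
    sum_ite_eq, mem_univ, if_true]

lemma mul_M_apply (s t : Fin 5) (x y : V) : (X.M s * X.M t) x y = X.c s t (X.rel x y) := by
  rw [X.mul_M, sum_smul_M_apply]

lemma rel_eq_zero_iff {x y : V} : X.rel x y = 0 ↔ x = y := by
  have h := X.M_apply 0 x y
  rw [X.M_zero, one_apply] at h
  split_ifs at h <;> simp_all

@[simp]
lemma rel_self (x : V) : X.rel x x = 0 := X.rel_eq_zero_iff.mpr rfl

lemma rel_comm (x y : V) : X.rel y x = X.rel x y := by
  have h : X.M (X.rel x y) y x = 1 := by
    rw [← X.M_symm, transpose_apply, X.M_apply, if_pos rfl]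
  rw [X.M_apply] at h
  split_ifs at h with h' <;> simp_all

lemma exists_rel_eq (t : Fin 5) : ∃ x y, X.rel x y = t := by
  by_contra! h
  exact X.M_ne_zero t (by ext x y; simp [M_apply, h x y])

lemma sum_smul_M_injective : Function.Injective fun f : Fin 5 → ℤ => ∑ t, f t • X.M t := by
  intro f g h
  funext t
  obtain ⟨x, y, rfl⟩ := X.exists_rel_eq t
  simpa only [sum_smul_M_apply] using congrFun (congrFun h x) y

lemma c_eq_card (s t : Fin 5) (x y : V) :
    X.c s t (X.rel x y) = #{z | X.rel x z = s ∧ X.rel z y = t} := by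
  have h := X.mul_M_apply s t x y
  simp only [mul_apply, M_apply, ite_zero_mul_ite_zero, mul_one, sum_boole] at h
  exact_mod_cast h.symm

lemma n_eq_card (t : Fin 5) (x : V) : X.n t = #{y | X.rel x y = t} := by
  rw [n, ← X.rel_self x, c_eq_card]
  simp_rw [X.rel_comm _ x, and_self]

lemma n_pos (t : Fin 5) : 0 < X.n t := by
  obtain ⟨x, y, hxy⟩ := X.exists_rel_eq t
  rw [X.n_eq_card t x]
  exact card_pos.mpr ⟨y, by simpa using hxy⟩

lemma n_zero : X.n 0 = 1 := by
  obtain ⟨x⟩ := X.nonempty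
  rw [X.n_eq_card 0 x, card_eq_one]
  exact ⟨x, by ext y; simp [X.rel_eq_zero_iff, eq_comm]⟩

lemma exists_of_c_pos {s t : Fin 5} {x y : V} (h : 0 < X.c s t (X.rel x y)) :
    ∃ z, X.rel x z = s ∧ X.rel z y = t := by
  rw [c_eq_card] at h
  obtain ⟨z, hz⟩ := card_pos.mp h
  exact ⟨z, by simpa using hz⟩

lemma c_comm (s t k : Fin 5) : X.c s t k = X.c t s k := by
  obtain ⟨x, y, rfl⟩ := X.exists_rel_eq k
  rw [X.c_eq_card, ← X.rel_comm, X.c_eq_card]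
  simp_rw [X.rel_comm y, X.rel_comm _ x, and_comm]

lemma M_mul_comm (s t : Fin 5) : X.M s * X.M t = X.M t * X.M s := by
  simp only [X.mul_M, X.c_comm s t]

lemma row_sum_M (t : Fin 5) (x : V) : ∑ y, X.M t x y = X.n t := by
  simp [M_apply, X.n_eq_card t x]

lemma M_mul_J (t : Fin 5) : X.M t * J = (X.n t : ℤ) • J := by
  ext x y
  simp [mul_apply, X.row_sum_M]

lemma sum_c_mul_n (s t : Fin 5) : ∑ k, X.c s t k * X.n k = X.n s * X.n t := by
  obtain ⟨x⟩ := X.nonempty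
  have h := congrFun (congrFun (Matrix.mul_assoc (X.M s) (X.M t) J) x) x
  simp only [X.mul_M, sum_mul, smul_mul_assoc, X.M_mul_J, mul_smul_comm, smul_smul,
    ← sum_smul, Matrix.smul_apply, of_apply, smul_eq_mul, mul_one] at h
  exact_mod_cast h.trans (mul_comm _ _)

lemma trace_sum_smul_M_mul (f : Fin 5 → ℤ) (k : Fin 5) :
    trace ((∑ t, f t • X.M t) * X.M k) = Fintype.card V * (f k * X.n k) := by
  have hdiag : ∀ x, ((∑ t, f t • X.M t) * X.M k) x x = f k * X.n k := by
    intro x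
    simp only [mul_apply, sum_smul_M_apply, M_apply, X.rel_comm _ x, mul_ite, mul_one, mul_zero,
      X.n_eq_card k x]
    rw [← sum_filter, sum_congr rfl fun y hy => by rw [(mem_filter.mp hy).2]]
    simp [mul_comm]
  simp only [trace, diag_apply, hdiag, sum_const, card_univ, nsmul_eq_mul]

/-- Both sides are `tr (M i * M j * M k) / |V|`. -/
lemma c_mul_n_eq (i j k : Fin 5) : X.c i j k * X.n k = X.c j k i * X.n i := by
  have hV : (Fintype.card V : ℤ) ≠ 0 := by
    have := X.nonempty
    exact_mod_cast Fintype.card_ne_zero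
  have h := trace_mul_comm (X.M i) (X.M j * X.M k)
  rw [← Matrix.mul_assoc, X.mul_M i j, X.mul_M j k, trace_sum_smul_M_mul,
    trace_sum_smul_M_mul] at h
  exact_mod_cast mul_left_cancel₀ hV h

def N0 : Matrix V V ℤ := X.M 0 + X.M 1

def N1 : Matrix V V ℤ := X.M 0 + X.M 1 + X.M 2

lemma N0_apply (x y : V) : X.N0 x y = if X.rel x y ≤ 1 then 1 else 0 := by
  simp only [N0, Matrix.add_apply, M_apply]
  generalize X.rel x y = r
  fin_cases r <;> decide

lemma N1_apply (x y : V) : X.N1 x y = if X.rel x y ≤ 2 then 1 else 0 := by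
  simp only [N1, Matrix.add_apply, M_apply]
  generalize X.rel x y = r
  fin_cases r <;> decide

lemma isEquivMatrix_N0 : IsEquivMatrix X.N0 (1 + X.n 1) where
  zero_or_one x y := by rw [N0_apply]; split_ifs <;> simp
  symm := by rw [N0, transpose_add, X.M_symm, X.M_symm]
  diag x := by simp [N0_apply]
  sq := by exact_mod_cast X.N0_sq

lemma isEquivMatrix_N1 : IsEquivMatrix X.N1 (1 + X.n 1 + X.n 2) where
  zero_or_one x y := by rw [N1_apply]; split_ifs <;> simp
  symm := by rw [N1, transpose_add, transpose_add, X.M_symm, X.M_symm, X.M_symm]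
  diag x := by simp [N1_apply]
  sq := by exact_mod_cast X.N1_sq

lemma rel_le_two_trans {x y z : V} (hxy : X.rel x y ≤ 2) (hyz : X.rel y z ≤ 2) :
    X.rel x z ≤ 2 := by
  have h := X.isEquivMatrix_N1.trans (x := x) (y := y) (z := z)
  simp only [N1_apply, if_pos hxy, if_pos hyz] at h
  by_contra hxz
  simp [hxz] at h

lemma N0_mul_N1 : X.N0 * X.N1 = (1 + X.n 1 : ℤ) • X.N1 :=
  X.isEquivMatrix_N0.mul_of_le X.isEquivMatrix_N1 fun x y h => by
    rw [N0_apply] at h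
    rw [N1_apply, if_pos]
    split_ifs at h with h'
    · exact h'.trans (by decide)
    · simp at h

lemma M_three_add_M_four : X.M 3 + X.M 4 = J - X.N1 := by
  rw [← X.sum_M, N1]
  abel

lemma c_eq_zero_of_le_two {s t k : Fin 5} (hs : s ≤ 2) (ht : 3 ≤ t) (hk : k ≤ 2) :
    X.c s t k = 0 := by
  obtain ⟨x, y, rfl⟩ := X.exists_rel_eq k
  by_contra h
  obtain ⟨z, hxz, hzy⟩ := X.exists_of_c_pos (Nat.pos_of_ne_zero h)
  have hzx : X.rel z x ≤ 2 := by rwa [X.rel_comm, hxz]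
  have := X.rel_le_two_trans hzx hk
  rw [hzy] at this
  exact absurd (ht.trans this) (by decide)

lemma M_mul_M_of_le_two {s i j : Fin 5} (hs : s ≤ 2)
    (hij : (i = 3 ∧ j = 4) ∨ (i = 4 ∧ j = 3)) :
    X.M s * X.M i = (X.c s i i : ℤ) • X.M i + (X.c s i j : ℤ) • X.M j := by
  ext x y
  rw [mul_M_apply, Matrix.add_apply, Matrix.smul_apply, Matrix.smul_apply, M_apply, M_apply]
  have hzero : ∀ k : Fin 5, k ≤ 2 → X.c s i k = 0 := fun k hk =>
    X.c_eq_zero_of_le_two hs (by rcases hij with ⟨rfl, -⟩ | ⟨rfl, -⟩ <;> decide) hk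
  generalize X.rel x y = r
  rcases hij with ⟨rfl, rfl⟩ | ⟨rfl, rfl⟩ <;> fin_cases r <;> simp [hzero]

lemma M_mul_N1 (t : Fin 5) : X.M t * X.N1 = X.N1 * X.M t := by
  simp only [N1, mul_add, add_mul, X.M_mul_comm t]

lemma mul_M_ne_smul {T : Finset (Fin 5)} (hT : T.Nonempty) (hT4 : T ⊆ {1, 2, 3, 4})
    {j : Fin 5} (hj : j = 3 ∨ j = 4) {k : ℤ} (hE : IsEquivMatrix (1 + ∑ t ∈ T, X.M t) k) :
    (1 + ∑ t ∈ T, X.M t) * X.M j ≠ k • X.M j := by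
  obtain ⟨x⟩ := X.nonempty
  have hk : k = 1 + ∑ t ∈ T, (X.n t : ℤ) := by
    rw [← hE.row_sum x]
    simp only [Matrix.add_apply, Matrix.sum_apply, sum_add_distrib, one_apply, sum_ite_eq,
      mem_univ, if_true]
    rw [sum_comm]
    simp only [X.row_sum_M]
  subst hk
  exact fun h => X.radical j (by rcases hj with rfl | rfl <;> decide) T hT hT4 ⟨hE.sq, h⟩

lemma N0_mul_M_ne {j : Fin 5} (hj : j = 3 ∨ j = 4) :
    X.N0 * X.M j ≠ (1 + X.n 1 : ℤ) • X.M j := by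
  have hN0 : X.N0 = 1 + ∑ t ∈ {1}, X.M t := by rw [sum_singleton, N0, X.M_zero]
  have h := X.mul_M_ne_smul (by simp) (by decide) hj (hN0 ▸ X.isEquivMatrix_N0)
  rwa [← hN0] at h

lemma N1_mul_M_ne {j : Fin 5} (hj : j = 3 ∨ j = 4) :
    X.N1 * X.M j ≠ (1 + X.n 1 + X.n 2 : ℤ) • X.M j := by
  have hN1 : X.N1 = 1 + ∑ t ∈ {1, 2}, X.M t := by
    rw [sum_pair (by decide), N1, X.M_zero, add_assoc]
  have h := X.mul_M_ne_smul (by simp) (by decide) hj (hN1 ▸ X.isEquivMatrix_N1)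
  rwa [← hN1] at h

/-- `J - M w = I + M 1 + M 2 + M u` would lie in the radical of `M w`. -/
lemma not_isEquivMatrix_J_sub_M {u w : Fin 5} (huw : (u = 3 ∧ w = 4) ∨ (u = 4 ∧ w = 3))
    {k : ℤ} :
    ¬ IsEquivMatrix (J - X.M w) k := by
  intro hE
  have h : (J - X.M w) * (J - (J - X.M w)) = k • (J - (J - X.M w)) := by
    rw [mul_sub, hE.mul_J, hE.sq, ← smul_sub]
  rw [sub_sub_cancel] at h
  have hsum : J - X.M w = 1 + ∑ t ∈ {1, 2, u}, X.M t := by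
    rw [← X.sum_M, X.M_zero]
    rcases huw with ⟨rfl, rfl⟩ | ⟨rfl, rfl⟩ <;> simp [sum_insert] <;> abel
  rw [hsum] at h hE
  exact X.mul_M_ne_smul (by simp) (by rcases huw with ⟨rfl, -⟩ | ⟨rfl, -⟩ <;> decide)
    (by rcases huw with ⟨-, rfl⟩ | ⟨-, rfl⟩ <;> simp) hE h

lemma M_add_M_eq {i j : Fin 5} (hij : (i = 3 ∧ j = 4) ∨ (i = 4 ∧ j = 3)) :
    X.M i + X.M j = X.M 3 + X.M 4 := by
  rcases hij with ⟨rfl, rfl⟩ | ⟨rfl, rfl⟩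
  · rfl
  · exact add_comm _ _

/-- Expanding `E * (E * M i) = k • (E * M i)` in the basis `M i, M j` gives
`(p - q) (p - k) = 0` and `q (p - q) = 0`, so `p ≠ q` would force `E * M i = k • M i`. -/
lemma coeff_eq_of_mul_M_eq {i j : Fin 5} (hij : (i = 3 ∧ j = 4) ∨ (i = 4 ∧ j = 3))
    {E : Matrix V V ℤ} {k p q : ℤ} (hE : IsEquivMatrix E k) (hEN1 : E * X.N1 = k • X.N1)
    (hEi : E * X.M i = p • X.M i + q • X.M j) (hrad : E * X.M i ≠ k • X.M i) : p = q := by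
  have hEij : E * X.M i + E * X.M j = k • (X.M i + X.M j) := by
    rw [← mul_add, X.M_add_M_eq hij, X.M_three_add_M_four, mul_sub, hE.mul_J, hEN1, smul_sub]
  have hEj : E * X.M j = (k - p) • X.M i + (k - q) • X.M j := by
    linear_combination (norm := module) hEij - hEi
  have hsq : E * (E * X.M i) = k • (E * X.M i) := by
    rw [← Matrix.mul_assoc, hE.sq, smul_mul_assoc]
  rw [hEi, mul_add, mul_smul_comm, mul_smul_comm, hEi, hEj] at hsq
  have hzero : ((p - q) * (p - k)) • X.M i + (q * (p - q)) • X.M j = 0 := by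
    linear_combination (norm := module) hsq
  have hji : j ≠ i := by rcases hij with ⟨rfl, rfl⟩ | ⟨rfl, rfl⟩ <;> decide
  obtain ⟨x, y, hxy⟩ := X.exists_rel_eq i
  obtain ⟨x', y', hxy'⟩ := X.exists_rel_eq j
  have hi := congrFun (congrFun hzero x) y
  have hj := congrFun (congrFun hzero x') y'
  simp only [Matrix.add_apply, Matrix.smul_apply, M_apply, hxy, hxy', hji, hji.symm, if_true,
    if_false, smul_eq_mul, mul_one, mul_zero, add_zero, zero_add, Matrix.zero_apply] at hi hj
  by_contra hpq
  have hpk : p = k := by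
    simpa [sub_eq_zero, hpq] using hi
  have hq : q = 0 := by
    simpa [sub_eq_zero, hpq] using hj
  exact hrad (by rw [hEi, hpk, hq, zero_smul, add_zero])

lemma N0_mul_M {i j : Fin 5} (hij : (i = 3 ∧ j = 4) ∨ (i = 4 ∧ j = 3)) :
    X.N0 * X.M i = (1 + X.c 1 i i : ℤ) • X.M i + (X.c 1 i j : ℤ) • X.M j := by
  rw [N0, add_mul, X.M_zero, one_mul, X.M_mul_M_of_le_two (by decide) hij, add_smul, one_smul,
    add_assoc]

lemma N1_mul_M {i j : Fin 5} (hij : (i = 3 ∧ j = 4) ∨ (i = 4 ∧ j = 3)) :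
    X.N1 * X.M i = (1 + X.c 1 i i + X.c 2 i i : ℤ) • X.M i
      + (X.c 1 i j + X.c 2 i j : ℤ) • X.M j := by
  rw [N1, add_mul, ← N0, X.N0_mul_M hij, X.M_mul_M_of_le_two (by decide) hij]
  module

lemma c_one_self_add_one {i j : Fin 5} (hij : (i = 3 ∧ j = 4) ∨ (i = 4 ∧ j = 3)) :
    X.c 1 i i + 1 = X.c 1 i j := by
  have hi : i = 3 ∨ i = 4 := by rcases hij with ⟨rfl, -⟩ | ⟨rfl, -⟩ <;> simp
  have := X.coeff_eq_of_mul_M_eq hij X.isEquivMatrix_N0 X.N0_mul_N1 (X.N0_mul_M hij)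
    (X.N0_mul_M_ne hi)
  omega

lemma c_two_self {i j : Fin 5} (hij : (i = 3 ∧ j = 4) ∨ (i = 4 ∧ j = 3)) :
    X.c 2 i i = X.c 2 i j := by
  have hi : i = 3 ∨ i = 4 := by rcases hij with ⟨rfl, -⟩ | ⟨rfl, -⟩ <;> simp
  have := X.coeff_eq_of_mul_M_eq hij X.isEquivMatrix_N1 X.isEquivMatrix_N1.sq (X.N1_mul_M hij)
    (X.N1_mul_M_ne hi)
  have := X.c_one_self_add_one hij
  omega

lemma three_le_of_pair {i j : Fin 5} (hij : (i = 3 ∧ j = 4) ∨ (i = 4 ∧ j = 3)) : 3 ≤ i := by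
  rcases hij with ⟨rfl, -⟩ | ⟨rfl, -⟩ <;> decide

lemma c_self_mul_n_add_c_mul_n {s i j : Fin 5} (hs : s ≤ 2)
    (hij : (i = 3 ∧ j = 4) ∨ (i = 4 ∧ j = 3)) :
    X.c s i i * X.n i + X.c s i j * X.n j = X.n s * X.n i := by
  have h := X.sum_c_mul_n s i
  have hi := three_le_of_pair hij
  rw [Fin.sum_univ_five, X.c_eq_zero_of_le_two (k := 0) hs hi (by decide),
    X.c_eq_zero_of_le_two (k := 1) hs hi (by decide),
    X.c_eq_zero_of_le_two (k := 2) hs hi (by decide)] at h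
  rcases hij with ⟨rfl, rfl⟩ | ⟨rfl, rfl⟩ <;> linear_combination h

lemma c_one_mul_n_add {i j : Fin 5} (hij : (i = 3 ∧ j = 4) ∨ (i = 4 ∧ j = 3)) :
    X.c 1 i j * (X.n 3 + X.n 4) = (1 + X.n 1) * X.n i := by
  have h := X.c_self_mul_n_add_c_mul_n (s := 1) (by decide) hij
  rw [← X.c_one_self_add_one hij] at h ⊢
  rcases hij with ⟨rfl, rfl⟩ | ⟨rfl, rfl⟩ <;> linear_combination h

lemma c_two_mul_n_add {i j : Fin 5} (hij : (i = 3 ∧ j = 4) ∨ (i = 4 ∧ j = 3)) :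
    X.c 2 i j * (X.n 3 + X.n 4) = X.n 2 * X.n i := by
  have h := X.c_self_mul_n_add_c_mul_n (s := 2) (by decide) hij
  rw [X.c_two_self hij] at h
  rcases hij with ⟨rfl, rfl⟩ | ⟨rfl, rfl⟩ <;> linear_combination h

lemma c_self_mul_n (i t : Fin 5) : X.c i i t * X.n t = X.c t i i * X.n i := by
  rw [X.c_mul_n_eq, X.c_comm i t]

lemma c_self_two_pos {i j : Fin 5} (hij : (i = 3 ∧ j = 4) ∨ (i = 4 ∧ j = 3)) :
    0 < X.c i i 2 := by
  have he : 0 < X.c 2 i j := pos_of_mul_pos_left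
    (by rw [X.c_two_mul_n_add hij]; exact Nat.mul_pos (X.n_pos 2) (X.n_pos i)) (Nat.zero_le _)
  refine pos_of_mul_pos_left (b := X.n 2) ?_ (Nat.zero_le _)
  rw [X.c_self_mul_n, X.c_two_self hij]
  exact Nat.mul_pos he (X.n_pos i)

lemma M_two_mul_M_two :
    X.M 2 * X.M 2 = ∑ t, ![(X.n 2 : ℤ), X.n 2, X.n 2 - 1 - X.n 1, 0, 0] t • X.M t := by
  have hN1N0 : X.N1 * X.N0 = (1 + X.n 1 : ℤ) • X.N1 := by
    have h := congrArg transpose X.N0_mul_N1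
    rwa [transpose_mul, transpose_smul, X.isEquivMatrix_N0.symm, X.isEquivMatrix_N1.symm] at h
  have hM2 : X.M 2 = X.N1 - X.N0 := by rw [N1, N0]; abel
  rw [Fin.sum_univ_five]
  conv_lhs => rw [hM2, sub_mul, mul_sub, mul_sub, X.isEquivMatrix_N1.sq, X.isEquivMatrix_N0.sq,
    hN1N0, X.N0_mul_N1]
  simp only [N0, N1, Matrix.cons_val]
  module

lemma c_two_two (t : Fin 5) :
    (X.c 2 2 t : ℤ) = ![(X.n 2 : ℤ), X.n 2, X.n 2 - 1 - X.n 1, 0, 0] t :=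
  congrFun (X.sum_smul_M_injective ((X.mul_M 2 2).symm.trans X.M_two_mul_M_two)) t

def sqCoeff (i t : Fin 5) : ℤ := X.c 2 2 t + 2 * X.c 2 i t + X.c i i t

lemma M_two_add_M_sq (i : Fin 5) :
    (X.M 2 + X.M i) * (X.M 2 + X.M i) = ∑ t, X.sqCoeff i t • X.M t := by
  rw [add_mul, mul_add, mul_add, X.M_mul_comm i 2, X.mul_M 2 2, X.mul_M 2 i, X.mul_M i i]
  simp only [sqCoeff, add_smul, two_mul, sum_add_distrib]
  abel

lemma sqCoeff_one {i j : Fin 5} (hij : (i = 3 ∧ j = 4) ∨ (i = 4 ∧ j = 3)) :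
    X.sqCoeff i 1 = X.n 2 + X.c i i 1 := by
  rw [sqCoeff, X.c_two_two, X.c_eq_zero_of_le_two (by decide) (three_le_of_pair hij) (by decide)]
  simp

lemma sqCoeff_two {i j : Fin 5} (hij : (i = 3 ∧ j = 4) ∨ (i = 4 ∧ j = 3)) :
    X.sqCoeff i 2 = X.n 2 - 1 - X.n 1 + X.c i i 2 := by
  rw [sqCoeff, X.c_two_two, X.c_eq_zero_of_le_two (by decide) (three_le_of_pair hij) (by decide)]
  simp

lemma sqCoeff_of_three_le {i j t : Fin 5} (hij : (i = 3 ∧ j = 4) ∨ (i = 4 ∧ j = 3))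
    (ht : 3 ≤ t) : X.sqCoeff i t = 2 * X.c 2 i j + X.c i i t := by
  have h := X.c_two_self hij
  obtain rfl | rfl : t = 3 ∨ t = 4 := by omega
  all_goals rcases hij with ⟨rfl, rfl⟩ | ⟨rfl, rfl⟩ <;> simp [sqCoeff, X.c_two_two, h]

lemma c_three_add_c_four_eq {i j : Fin 5} (hij : (i = 3 ∧ j = 4) ∨ (i = 4 ∧ j = 3)) :
    X.c i 3 3 + X.c i 4 3 = X.c i 3 4 + X.c i 4 4 := by
  set p : ℤ := 1 + X.c 1 i i + X.c 2 i i
  have hN1 : X.N1 * X.M i = p • (X.M 3 + X.M 4) := by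
    have hpq : (X.c 1 i j + X.c 2 i j : ℤ) = p := by
      have := X.c_one_self_add_one hij; have := X.c_two_self hij
      omega
    rw [X.N1_mul_M hij, hpq, ← smul_add, X.M_add_M_eq hij]
  have h : X.M i * (X.M 3 + X.M 4) = (X.n i : ℤ) • J - p • (X.M 3 + X.M 4) := by
    rw [← hN1, ← X.M_mul_N1, ← X.M_mul_J, ← mul_sub, X.M_three_add_M_four]
  obtain ⟨x, y, h3⟩ := X.exists_rel_eq 3
  obtain ⟨x', y', h4⟩ := X.exists_rel_eq 4
  have e3 := congrFun (congrFun h x) y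
  have e4 := congrFun (congrFun h x') y'
  simp only [mul_add, Matrix.add_apply, Matrix.sub_apply, Matrix.smul_apply, mul_M_apply,
    M_apply, h3, h4, of_apply] at e3 e4
  simp at e3 e4
  omega

lemma c_three_three_three_eq (h : X.c 4 4 3 = X.c 4 4 4) : X.c 3 3 3 = X.c 3 3 4 := by
  have h3 := X.c_three_add_c_four_eq (Or.inl ⟨rfl, rfl⟩)
  have h4 := X.c_three_add_c_four_eq (Or.inr ⟨rfl, rfl⟩)
  have := X.c_comm 3 4 3; have := X.c_comm 3 4 4
  omega

lemma sqCoeff_rel_eq_of_sq_eq {i : Fin 5} {P : Matrix V V ℤ} {a l1 l2 : ℤ}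
    (hS : (X.M 2 + X.M i) * (X.M 2 + X.M i)
      = a • (1 : Matrix V V ℤ) + l1 • (P - 1) + l2 • (J - P))
    {x y : V} (hxy : x ≠ y) : X.sqCoeff i (X.rel x y) = l1 * P x y + l2 * (1 - P x y) := by
  have h := congrFun (congrFun hS x) y
  simp only [M_two_add_M_sq, sum_smul_M_apply, Matrix.add_apply, Matrix.sub_apply,
    Matrix.smul_apply, one_apply_ne hxy, of_apply, smul_eq_mul] at h
  linear_combination h

section FactorsThroughRel

variable {X} {P : Matrix V V ℤ} {k : ℤ} {b : Fin 5 → ℤ}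

lemma coeff_eq_one_of_c_pos (hP : IsEquivMatrix P k) (hb : ∀ x y, P x y = b (X.rel x y))
    {s t u : Fin 5} (hs : b s = 1) (ht : b t = 1) (hc : 0 < X.c s t u) : b u = 1 := by
  obtain ⟨x, y, rfl⟩ := X.exists_rel_eq u
  obtain ⟨z, hxz, hzy⟩ := X.exists_of_c_pos hc
  rw [← hb]
  exact hP.trans (by rw [hb, hxz, hs]) (by rw [hb, hzy, ht])

lemma coeff_eq_zero_or_one (hP : IsEquivMatrix P k) (hb : ∀ x y, P x y = b (X.rel x y))
    (t : Fin 5) : b t = 0 ∨ b t = 1 := by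
  obtain ⟨x, y, rfl⟩ := X.exists_rel_eq t
  rw [← hb]
  exact hP.zero_or_one x y

lemma coeff_one_eq_one (hP : IsEquivMatrix P k) (hb : ∀ x y, P x y = b (X.rel x y))
    (h : b 2 = 1) : b 1 = 1 :=
  coeff_eq_one_of_c_pos hP hb h h (by
    have h221 := X.c_two_two 1
    have := X.n_pos 2
    simp only [Matrix.cons_val] at h221
    omega)

lemma coeff_two_eq_one (hP : IsEquivMatrix P k) (hb : ∀ x y, P x y = b (X.rel x y))
    {u : Fin 5} (hu : u = 3 ∨ u = 4) (h : b u = 1) : b 2 = 1 := by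
  rcases hu with rfl | rfl
  · exact coeff_eq_one_of_c_pos hP hb h h (X.c_self_two_pos (Or.inl ⟨rfl, rfl⟩))
  · exact coeff_eq_one_of_c_pos hP hb h h (X.c_self_two_pos (Or.inr ⟨rfl, rfl⟩))

/-- Otherwise `P` would be `J - M 3` or `J - M 4`. -/
lemma coeff_three_eq_coeff_four (hP : IsEquivMatrix P k)
    (hb : ∀ x y, P x y = b (X.rel x y)) : b 3 = b 4 := by
  by_contra hne
  obtain ⟨u, w, huw, hu, hw⟩ : ∃ u w : Fin 5, ((u = 3 ∧ w = 4) ∨ (u = 4 ∧ w = 3)) ∧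
      b u = 1 ∧ b w = 0 := by
    rcases coeff_eq_zero_or_one hP hb 3 with h3 | h3 <;>
      rcases coeff_eq_zero_or_one hP hb 4 with h4 | h4
    · exact absurd (h3.trans h4.symm) hne
    · exact ⟨4, 3, Or.inr ⟨rfl, rfl⟩, h4, h3⟩
    · exact ⟨3, 4, Or.inl ⟨rfl, rfl⟩, h3, h4⟩
    · exact absurd (h3.trans h4.symm) hne
  have hu34 : u = 3 ∨ u = 4 := by rcases huw with ⟨rfl, -⟩ | ⟨rfl, -⟩ <;> simp
  have hb2 := coeff_two_eq_one hP hb hu34 hu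
  have hb1 := coeff_one_eq_one hP hb hb2
  have hb0 : b 0 = 1 := by
    obtain ⟨x⟩ := X.nonempty
    rw [← X.rel_self x, ← hb]
    exact hP.diag x
  refine X.not_isEquivMatrix_J_sub_M huw (k := k) ?_
  convert hP using 1
  ext x y
  rw [hb, Matrix.sub_apply, of_apply, M_apply]
  generalize X.rel x y = r
  rcases huw with ⟨rfl, rfl⟩ | ⟨rfl, rfl⟩ <;> fin_cases r <;> simp_all

lemma coeff_pattern (hP : IsEquivMatrix P k) (hb : ∀ x y, P x y = b (X.rel x y)) :
    b 3 = b 4 ∧ (b 1 = b 2 ∨ b 2 = b 3) := by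
  have h34 := coeff_three_eq_coeff_four hP hb
  have h21 := coeff_one_eq_one hP hb
  have h32 := coeff_two_eq_one hP hb (u := 3) (Or.inl rfl)
  refine ⟨h34, ?_⟩
  rcases coeff_eq_zero_or_one hP hb 1 with h1 | h1 <;>
    rcases coeff_eq_zero_or_one hP hb 2 with h2 | h2 <;>
    rcases coeff_eq_zero_or_one hP hb 3 with h3 | h3 <;> simp_all

end FactorsThroughRel

lemma pattern_of_ddg {P : Matrix V V ℤ} {k : ℤ} {a : Fin 5 → ℤ} {l1 l2 : ℤ}
    (hP : IsEquivMatrix P k)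
    (ha : ∀ x y, x ≠ y → a (X.rel x y) = l1 * P x y + l2 * (1 - P x y)) :
    a 3 = a 4 ∧ (a 1 = a 2 ∨ a 2 = a 3) := by
  choose xs ys hrel using X.exists_rel_eq
  have hne : ∀ t, t ≠ 0 → xs t ≠ ys t := fun t ht h =>
    ht (by rw [← hrel t, h, X.rel_self])
  have hwit : ∀ t, t ≠ 0 → a t = l1 * P (xs t) (ys t) + l2 * (1 - P (xs t) (ys t)) :=
    fun t ht => by rw [← ha _ _ (hne t ht), hrel]
  by_cases hl : l1 = l2
  · have hconst : ∀ t, t ≠ 0 → a t = l2 := fun t ht => by rw [hwit t ht, hl]; ring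
    simp [hconst]
  · have hb : ∀ x y, P x y = P (xs (X.rel x y)) (ys (X.rel x y)) := by
      intro x y
      by_cases hxy : x = y
      · rw [hxy, X.rel_self, X.rel_eq_zero_iff.mp (hrel 0), hP.diag, hP.diag]
      · have h := (ha x y hxy).symm.trans (hwit _ (mt X.rel_eq_zero_iff.mp hxy))
        have : (l1 - l2) * (P x y - P (xs (X.rel x y)) (ys (X.rel x y))) = 0 := by
          linear_combination h
        exact sub_eq_zero.mp ((mul_eq_zero.mp this).resolve_left (sub_ne_zero.mpr hl))
    obtain ⟨h34, h12⟩ := X.coeff_pattern (b := fun t => P (xs t) (ys t)) hP hb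
    refine ⟨by rw [hwit 3 (by decide), hwit 4 (by decide), h34], ?_⟩
    rcases h12 with h | h
    · exact Or.inl (by rw [hwit 1 (by decide), hwit 2 (by decide), h])
    · exact Or.inr (by rw [hwit 2 (by decide), hwit 3 (by decide), h])

lemma c_self_three_eq_of_sqCoeff_eq {i j : Fin 5} (hij : (i = 3 ∧ j = 4) ∨ (i = 4 ∧ j = 3))
    (h : X.sqCoeff i 3 = X.sqCoeff i 4) : X.c i i 3 = X.c i i 4 := by
  rw [X.sqCoeff_of_three_le hij (by decide), X.sqCoeff_of_three_le hij (by decide)] at h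
  omega

lemma c_self_two_mul_n_add {i j : Fin 5} (hij : (i = 3 ∧ j = 4) ∨ (i = 4 ∧ j = 3)) :
    X.c i i 2 * (X.n 3 + X.n 4) = X.n i * X.n i := by
  have hD2 := X.c_self_mul_n i 2
  have he := X.c_two_mul_n_add hij
  rw [X.c_two_self hij] at hD2
  zify at hD2 he ⊢
  have hn2 : (X.n 2 : ℤ) ≠ 0 := by exact_mod_cast (X.n_pos 2).ne'
  exact mul_left_cancel₀ hn2 (by linear_combination (X.n 3 + X.n 4 : ℤ) * hD2 + X.n i * he)

lemma n_three_mul_n_four_eq {i j : Fin 5} (hij : (i = 3 ∧ j = 4) ∨ (i = 4 ∧ j = 3))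
    (h : X.sqCoeff i 1 = X.sqCoeff i 2) :
    (X.n 3 * X.n 4 : ℤ) = X.n 1 * (X.n 1 + 1) * (X.n 3 + X.n 4) := by
  have hs := X.c_self_two_mul_n_add hij
  have hD1 := X.c_self_mul_n i 1
  have hc1 := X.c_one_self_add_one hij
  have hg := X.c_one_mul_n_add hij
  zify at hs hD1 hc1 hg
  rw [X.sqCoeff_one hij, X.sqCoeff_two hij] at h
  have key : (X.n i * (X.n 3 + X.n 4) - X.n i * X.n i : ℤ)
      = X.n 1 * (X.n 1 + 1) * (X.n 3 + X.n 4) := by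
    linear_combination (-(X.n 1 : ℤ) * (X.n 3 + X.n 4)) * h - (X.n 1 : ℤ) * hs
      + (X.n 3 + X.n 4 : ℤ) * (hD1 + X.n i * hc1) + (X.n i : ℤ) * hg
  rcases hij with ⟨rfl, rfl⟩ | ⟨rfl, rfl⟩ <;> linear_combination key

lemma one_div_add_one_div_eq {i j : Fin 5} (hij : (i = 3 ∧ j = 4) ∨ (i = 4 ∧ j = 3))
    (h : X.sqCoeff i 1 = X.sqCoeff i 2) :
    1 / (X.n 3 : ℚ) + 1 / X.n 4 = 1 / X.n 1 - 1 / (X.n 1 + 1) := by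
  have hprod : (X.n 3 * X.n 4 : ℚ) = X.n 1 * (X.n 1 + 1) * (X.n 3 + X.n 4) := by
    exact_mod_cast X.n_three_mul_n_four_eq hij h
  have := X.n_pos 1; have := X.n_pos 3; have := X.n_pos 4
  field_simp
  linear_combination -hprod

lemma n_two_sub_mul_n_eq {i j : Fin 5} (hij : (i = 3 ∧ j = 4) ∨ (i = 4 ∧ j = 3))
    (h34 : X.c i i 3 = X.c i i 4) (h : X.sqCoeff i 2 = X.sqCoeff i 3) :
    ((X.n 2 : ℤ) - 1 - X.n 1) * X.n j = 2 * (1 + X.n 1) * X.n i := by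
  have hs := X.c_self_two_mul_n_add hij
  have hD1 := X.c_self_mul_n i 1
  have hD2 := X.c_self_mul_n i 2
  have hc1 := X.c_one_self_add_one hij
  have hc2 := X.c_two_self hij
  have hg := X.c_one_mul_n_add hij
  have he := X.c_two_mul_n_add hij
  have hrow := X.sum_c_mul_n i i
  rw [Fin.sum_univ_five, X.n_zero, mul_one, show X.c i i 0 = X.n i from rfl] at hrow
  zify at hs hD1 hD2 hc1 hc2 hg he hrow h34
  rw [X.sqCoeff_two hij, X.sqCoeff_of_three_le hij (by decide)] at h
  -- the row-sum identity for `M i * M i`, times `n 3 + n 4`, with every `c i i t` eliminated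
  have hquad : ((X.n 2 : ℤ) - 1 - X.n 1) * (X.n 3 + X.n 4) ^ 2
      - 2 * X.n 2 * X.n i * (X.n 3 + X.n 4) + (1 + X.n 1 + X.n 2) * X.n i ^ 2 = 0 := by
    linear_combination (X.n 3 + X.n 4 : ℤ) ^ 2 * h - (X.n 3 + X.n 4 : ℤ) * hs
      + 2 * (X.n 3 + X.n 4 : ℤ) * he + (X.n 3 + X.n 4 : ℤ) * (hrow + X.n 4 * h34)
      - (X.n 3 + X.n 4 : ℤ) * (hD1 + X.n i * hc1) - X.n i * hg
      - (X.n 3 + X.n 4 : ℤ) * (hD2 + X.n i * hc2) - X.n i * he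
  have hF : (X.n j : ℤ) * (((X.n 2 : ℤ) - 1 - X.n 1) * X.n j - 2 * (1 + X.n 1) * X.n i)
      = 0 := by
    rcases hij with ⟨rfl, rfl⟩ | ⟨rfl, rfl⟩ <;> linear_combination hquad
  have hnj : (X.n j : ℤ) ≠ 0 := by exact_mod_cast (X.n_pos j).ne'
  exact sub_eq_zero.mp ((mul_eq_zero.mp hF).resolve_left hnj)

lemma div_sub_div_eq_one {i j : Fin 5} (hij : (i = 3 ∧ j = 4) ∨ (i = 4 ∧ j = 3))
    (h34 : X.c i i 3 = X.c i i 4) (h : X.sqCoeff i 2 = X.sqCoeff i 3) :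
    (X.n 2 : ℚ) / (X.n 1 + 1) - 2 * X.n i / X.n j = 1 := by
  have hlin : ((X.n 2 : ℚ) - 1 - X.n 1) * X.n j = 2 * (1 + X.n 1) * X.n i := by
    exact_mod_cast X.n_two_sub_mul_n_eq hij h34 h
  have := X.n_pos 1; have := X.n_pos j
  field_simp
  linear_combination hlin

end HigmanianConfig

/-- if `M2 + Mi` (for a fixed `i ∈ {3,4}`) is the adjacency matrix of a
divisible design graph for some equal-class-size partition of `V`, then
`c(3,3,3) = c(3,3,4)` and Eq. (1) or Eq. (2) holds. -/
theorem higmanian_fusion_ddg_necessary {V : Type*} [Fintype V] [DecidableEq V]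
    (X : HigmanianConfig V) (i j : Fin 5)
    (hij : (i = 3 ∧ j = 4) ∨ (i = 4 ∧ j = 3))
    (hddg : ∃ (P : Matrix V V ℤ) (n' l1 l2 : ℕ),
      Pᵀ = P ∧
      (∀ x y, P x y = 0 ∨ P x y = 1) ∧
      (∀ x, P x x = 1) ∧
      P * P = (n' : ℤ) • P ∧
      (X.M 2 + X.M i) * (X.M 2 + X.M i)
          = ((X.n 2 + X.n i : ℕ) : ℤ) • (1 : Matrix V V ℤ)
            + (l1 : ℤ) • (P - 1)
            + (l2 : ℤ) • ((Matrix.of fun _ _ => (1 : ℤ)) - P)) :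
    X.c 3 3 3 = X.c 3 3 4 ∧
    (1 / (X.n 3 : ℚ) + 1 / (X.n 4 : ℚ)
        = 1 / (X.n 1 : ℚ) - 1 / ((X.n 1 : ℚ) + 1) ∨
      (X.n 2 : ℚ) / ((X.n 1 : ℚ) + 1) - 2 * (X.n i : ℚ) / (X.n j : ℚ) = 1) := by
  obtain ⟨P, n', l1, l2, hPsymm, hP01, hPdiag, hPsq, hS⟩ := hddg
  obtain ⟨h34, h12⟩ := X.pattern_of_ddg ⟨hP01, hPsymm, hPdiag, hPsq⟩
    fun x y hxy => X.sqCoeff_rel_eq_of_sq_eq hS hxy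
  have hc := X.c_self_three_eq_of_sqCoeff_eq hij h34
  refine ⟨?_, h12.imp (X.one_div_add_one_div_eq hij) (X.div_sub_div_eq_one hij hc)⟩
  rcases hij with ⟨rfl, rfl⟩ | ⟨rfl, rfl⟩
  · exact hc
  · exact X.c_three_three_three_eq hc
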